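/- arXiv:2308.15621 — 2 statements merged into one kernel-verified Lean document; each statement's English description precedes it below -/
import Mathlib

section
/- Let {A_i}, {B_i}, {E_i}, {Ē_i}, {Ẽ_i}, {D_i} be nonnegative real sequences. Suppose that for all n ≥ 1, A_n² + Σ_{i=1}^n B_i² ≤ Σ_{i=1}^n E_i·A_i + Σ_{i=1}^{n-1} Ē_i·A_i + Ẽ_n·A_n + Σ_{i=1}^n D_i. Then for all n ≥ 1, (A_n² + Σ_{i=1}^n B_i²)^{1/2} ≤ Σ_{i=1}^n E_i + Σ_{i=1}^{n-1} Ē_i + max_{1≤i≤n} Ẽ_i + (Σ_{i=1}^n D_i)^{1/2}. -/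
theorem stmt_3 (A B E Ebar Etil D : ℕ → ℝ)
    (hA : ∀ i, 0 ≤ A i) (hB : ∀ i, 0 ≤ B i) (hE : ∀ i, 0 ≤ E i)
    (hEbar : ∀ i, 0 ≤ Ebar i) (hEtil : ∀ i, 0 ≤ Etil i) (hD : ∀ i, 0 ≤ D i)
    (h : ∀ n, 1 ≤ n →
      A n ^ 2 + ∑ i ∈ Finset.Icc 1 n, B i ^ 2 ≤
        ∑ i ∈ Finset.Icc 1 n, E i * A i + ∑ i ∈ Finset.Icc 1 (n - 1), Ebar i * A i
          + Etil n * A n + ∑ i ∈ Finset.Icc 1 n, D i) :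
    ∀ n, ∀ hn : 1 ≤ n,
      Real.sqrt (A n ^ 2 + ∑ i ∈ Finset.Icc 1 n, B i ^ 2) ≤
        ∑ i ∈ Finset.Icc 1 n, E i + ∑ i ∈ Finset.Icc 1 (n - 1), Ebar i
          + (Finset.Icc 1 n).sup' (Finset.nonempty_Icc.mpr hn) Etil
          + Real.sqrt (∑ i ∈ Finset.Icc 1 n, D i) := by
  intro n hn
  have hsne : (Finset.Icc 1 n).Nonempty := Finset.nonempty_Icc.mpr hn
  obtain ⟨m, hms, hmax⟩ := (Finset.Icc 1 n).exists_max_image A hsne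
  obtain ⟨hm1, hmn⟩ := Finset.mem_Icc.mp hms
  set K := ∑ i ∈ Finset.Icc 1 n, E i + ∑ i ∈ Finset.Icc 1 (n - 1), Ebar i
      + (Finset.Icc 1 n).sup' (Finset.nonempty_Icc.mpr hn) Etil with hKdef
  set d := ∑ i ∈ Finset.Icc 1 n, D i with hddef
  have hd0 : 0 ≤ d := Finset.sum_nonneg fun i _ => hD i
  have hsup0 : 0 ≤ (Finset.Icc 1 n).sup' (Finset.nonempty_Icc.mpr hn) Etil :=
    le_trans (hEtil m) (Finset.le_sup' Etil hms)
  have hK0 : 0 ≤ K := by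
    have h1 : (0:ℝ) ≤ ∑ i ∈ Finset.Icc 1 n, E i := Finset.sum_nonneg fun i _ => hE i
    have h2 : (0:ℝ) ≤ ∑ i ∈ Finset.Icc 1 (n - 1), Ebar i :=
      Finset.sum_nonneg fun i _ => hEbar i
    linarith
  -- key bound for any 1 ≤ k ≤ n
  have key : ∀ k, 1 ≤ k → k ≤ n →
      A k ^ 2 + ∑ i ∈ Finset.Icc 1 k, B i ^ 2 ≤ K * A m + d := by
    intro k hk1 hkn
    have hk := h k hk1
    have hEb : ∑ i ∈ Finset.Icc 1 k, E i * A i ≤ (∑ i ∈ Finset.Icc 1 n, E i) * A m := by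
      rw [Finset.sum_mul]
      refine le_trans (Finset.sum_le_sum ?_) (Finset.sum_le_sum_of_subset_of_nonneg
        (Finset.Icc_subset_Icc_right hkn) ?_)
      · intro i hi
        have hi' : i ∈ Finset.Icc 1 n := Finset.Icc_subset_Icc_right hkn hi
        exact mul_le_mul_of_nonneg_left (hmax i hi') (hE i)
      · intro i _ _
        exact mul_nonneg (hE i) (hA m)
    have hEbarb : ∑ i ∈ Finset.Icc 1 (k - 1), Ebar i * A i ≤
        (∑ i ∈ Finset.Icc 1 (n - 1), Ebar i) * A m := by
      rw [Finset.sum_mul]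
      refine le_trans (Finset.sum_le_sum ?_) (Finset.sum_le_sum_of_subset_of_nonneg
        (Finset.Icc_subset_Icc_right (Nat.sub_le_sub_right hkn 1)) ?_)
      · intro i hi
        have hi' : i ∈ Finset.Icc 1 n := by
          obtain ⟨h1, h2⟩ := Finset.mem_Icc.mp hi
          exact Finset.mem_Icc.mpr ⟨h1, le_trans h2 (le_trans (Nat.sub_le k 1) hkn)⟩
        exact mul_le_mul_of_nonneg_left (hmax i hi') (hEbar i)
      · intro i _ _
        exact mul_nonneg (hEbar i) (hA m)
    have hEtilb : Etil k * A k ≤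
        ((Finset.Icc 1 n).sup' (Finset.nonempty_Icc.mpr hn) Etil) * A m := by
      have hks : k ∈ Finset.Icc 1 n := Finset.mem_Icc.mpr ⟨hk1, hkn⟩
      exact mul_le_mul (Finset.le_sup' Etil hks) (hmax k hks) (hA k) hsup0
    have hDb : ∑ i ∈ Finset.Icc 1 k, D i ≤ d := by
      exact Finset.sum_le_sum_of_subset_of_nonneg (Finset.Icc_subset_Icc_right hkn)
        (fun i _ _ => hD i)
    have : K * A m = (∑ i ∈ Finset.Icc 1 n, E i) * A m
        + (∑ i ∈ Finset.Icc 1 (n - 1), Ebar i) * A m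
        + ((Finset.Icc 1 n).sup' (Finset.nonempty_Icc.mpr hn) Etil) * A m := by
      rw [hKdef]; ring
    linarith
  have hBm : 0 ≤ ∑ i ∈ Finset.Icc 1 m, B i ^ 2 :=
    Finset.sum_nonneg fun i _ => sq_nonneg _
  have hAm2 : A m ^ 2 ≤ K * A m + d := by
    have := key m hm1 hmn
    linarith
  have hsq : Real.sqrt d * Real.sqrt d = d := Real.mul_self_sqrt hd0
  have hsd : 0 ≤ Real.sqrt d := Real.sqrt_nonneg d
  have hAmb : A m ≤ K + Real.sqrt d := by
    by_contra hcon
    push_neg at hcon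
    have hApos : 0 < A m := lt_of_le_of_lt (by linarith) hcon
    have h1 : (K + Real.sqrt d) * A m < A m * A m := by
      exact mul_lt_mul_of_pos_right hcon hApos
    have h2 : Real.sqrt d ≤ A m := by linarith
    have h3 : Real.sqrt d * Real.sqrt d ≤ Real.sqrt d * A m :=
      mul_le_mul_of_nonneg_left h2 hsd
    nlinarith
  have hfin : A n ^ 2 + ∑ i ∈ Finset.Icc 1 n, B i ^ 2 ≤ (K + Real.sqrt d) ^ 2 := by
    have := key n hn le_rfl
    have hKm : K * A m ≤ K * (K + Real.sqrt d) := mul_le_mul_of_nonneg_left hAmb hK0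
    nlinarith
  have := Real.sqrt_le_sqrt hfin
  rwa [Real.sqrt_sq (by positivity)] at this
end

section
/- In the setting of the discrete Gronwall-type lemma, assume additionally that the maximum principle holds at index n, i.e., A_n² + Σ_{i=1}^n B_i² = max_{1≤ℓ≤n} (A_ℓ² + Σ_{i=1}^ℓ B_i²), and further that A_n² + Σ_{i=1}^n B_i² > Σ_{i=1}^n D_i. Then A_n² + Σ_{i=1}^n B_i² ≤ (Σ_{i=1}^n E_i + Σ_{i=1}^{n-1} Ē_i + Ẽ_n + (Σ_{i=1}^n D_i)^{1/2}) · (A_n² + Σ_{i=1}^n B_i²)^{1/2}. -/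
theorem stmt_4 (A B E Ebar Etil D : ℕ → ℝ)
    (hA : ∀ i, 0 ≤ A i) (hB : ∀ i, 0 ≤ B i) (hE : ∀ i, 0 ≤ E i)
    (hEbar : ∀ i, 0 ≤ Ebar i) (hEtil : ∀ i, 0 ≤ Etil i) (hD : ∀ i, 0 ≤ D i)
    (h : ∀ m, 1 ≤ m →
      A m ^ 2 + ∑ i ∈ Finset.Icc 1 m, B i ^ 2 ≤
        ∑ i ∈ Finset.Icc 1 m, E i * A i + ∑ i ∈ Finset.Icc 1 (m - 1), Ebar i * A i
          + Etil m * A m + ∑ i ∈ Finset.Icc 1 m, D i)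
    (n : ℕ) (hn : 1 ≤ n)
    (hmax : A n ^ 2 + ∑ i ∈ Finset.Icc 1 n, B i ^ 2 =
      (Finset.Icc 1 n).sup' (Finset.nonempty_Icc.mpr hn)
        (fun ℓ => A ℓ ^ 2 + ∑ i ∈ Finset.Icc 1 ℓ, B i ^ 2))
    (hgt : A n ^ 2 + ∑ i ∈ Finset.Icc 1 n, B i ^ 2 > ∑ i ∈ Finset.Icc 1 n, D i) :
    A n ^ 2 + ∑ i ∈ Finset.Icc 1 n, B i ^ 2 ≤
      (∑ i ∈ Finset.Icc 1 n, E i + ∑ i ∈ Finset.Icc 1 (n - 1), Ebar i + Etil n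
        + Real.sqrt (∑ i ∈ Finset.Icc 1 n, D i))
        * Real.sqrt (A n ^ 2 + ∑ i ∈ Finset.Icc 1 n, B i ^ 2) := by
  set S := A n ^ 2 + ∑ i ∈ Finset.Icc 1 n, B i ^ 2 with hS
  set s := Real.sqrt S with hs
  have hSnonneg : 0 ≤ S := by
    have : 0 ≤ ∑ i ∈ Finset.Icc 1 n, B i ^ 2 :=
      Finset.sum_nonneg fun i _ => sq_nonneg _
    positivity
  have hsnn : 0 ≤ s := Real.sqrt_nonneg _
  -- each A i ≤ s for i ∈ Icc 1 n
  have hAi : ∀ i ∈ Finset.Icc 1 n, A i ≤ s := by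
    intro i hi
    have h1 : A i ^ 2 ≤ S := by
      have h2 := Finset.le_sup' (fun ℓ => A ℓ ^ 2 + ∑ j ∈ Finset.Icc 1 ℓ, B j ^ 2) hi
      have h3 : 0 ≤ ∑ j ∈ Finset.Icc 1 i, B j ^ 2 :=
        Finset.sum_nonneg fun j _ => sq_nonneg _
      rw [← hmax] at h2
      have h4 : A i ^ 2 + ∑ j ∈ Finset.Icc 1 i, B j ^ 2 ≤ S := h2
      linarith [h3, h4]
    calc A i = Real.sqrt (A i ^ 2) := by rw [Real.sqrt_sq (hA i)]
    _ ≤ s := Real.sqrt_le_sqrt h1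
  have hAi' : ∀ i, i ∈ Finset.Icc 1 (n - 1) → A i ≤ s := by
    intro i hi
    apply hAi
    simp only [Finset.mem_Icc] at hi ⊢
    exact ⟨hi.1, le_trans hi.2 (Nat.sub_le n 1)⟩
  have hmain := h n hn
  have hE1 : ∑ i ∈ Finset.Icc 1 n, E i * A i ≤ (∑ i ∈ Finset.Icc 1 n, E i) * s := by
    rw [Finset.sum_mul]
    exact Finset.sum_le_sum fun i hi => mul_le_mul_of_nonneg_left (hAi i hi) (hE i)
  have hE2 : ∑ i ∈ Finset.Icc 1 (n - 1), Ebar i * A i ≤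
      (∑ i ∈ Finset.Icc 1 (n - 1), Ebar i) * s := by
    rw [Finset.sum_mul]
    exact Finset.sum_le_sum fun i hi => mul_le_mul_of_nonneg_left (hAi' i hi) (hEbar i)
  have hE3 : Etil n * A n ≤ Etil n * s :=
    mul_le_mul_of_nonneg_left (hAi n (by simp [hn])) (hEtil n)
  have hDs : ∑ i ∈ Finset.Icc 1 n, D i ≤ Real.sqrt (∑ i ∈ Finset.Icc 1 n, D i) * s := by
    have hDnn : 0 ≤ ∑ i ∈ Finset.Icc 1 n, D i := Finset.sum_nonneg fun i _ => hD i
    have h1 : Real.sqrt (∑ i ∈ Finset.Icc 1 n, D i) ≤ s :=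
      Real.sqrt_le_sqrt (le_of_lt hgt)
    calc ∑ i ∈ Finset.Icc 1 n, D i
        = Real.sqrt (∑ i ∈ Finset.Icc 1 n, D i) * Real.sqrt (∑ i ∈ Finset.Icc 1 n, D i) := by
          rw [Real.mul_self_sqrt hDnn]
    _ ≤ Real.sqrt (∑ i ∈ Finset.Icc 1 n, D i) * s :=
        mul_le_mul_of_nonneg_left h1 (Real.sqrt_nonneg _)
  calc S ≤ ∑ i ∈ Finset.Icc 1 n, E i * A i + ∑ i ∈ Finset.Icc 1 (n - 1), Ebar i * A i
          + Etil n * A n + ∑ i ∈ Finset.Icc 1 n, D i := hmain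
  _ ≤ (∑ i ∈ Finset.Icc 1 n, E i) * s + (∑ i ∈ Finset.Icc 1 (n - 1), Ebar i) * s
          + Etil n * s + Real.sqrt (∑ i ∈ Finset.Icc 1 n, D i) * s := by
        linarith
  _ = (∑ i ∈ Finset.Icc 1 n, E i + ∑ i ∈ Finset.Icc 1 (n - 1), Ebar i + Etil n
        + Real.sqrt (∑ i ∈ Finset.Icc 1 n, D i)) * s := by ring
end
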